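/- Let f be a Boolean network of dimension n and x ∈ 𝔹^n, and let h be the smallest hypercube closed by f containing x. If h is a minimal closed hypercube (minimal trap space) of f, then every configuration of c(h) is reachable from x under the most permissive semantics, and conversely reachable from every configuration of c(h); hence c(h) is an attractor of the most permissive semantics containing x. -/
import Mathlib


inductive PState : Type
  | zero | up | down | one
deriving DecidableEq

def PState.ofBool : Bool → PState
  | false => .zero
  | true  => .one

def PState.isBool (p : PState) : Prop := p = .zero ∨ p = .one

abbrev BN (n : ℕ) := (Fin n → Bool) → Fin n → Bool

def gamma {n : ℕ} (x : Fin n → PState) : Set (Fin n → Bool) :=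
  {b | ∀ i (v : Bool), x i = PState.ofBool v → b i = v}

def mpStep {n : ℕ} (f : BN n) (x y : Fin n → PState) : Prop :=
  ∃ i : Fin n, x i ≠ y i ∧ (∀ j, j ≠ i → x j = y j) ∧
    ((y i = .up ∧ x i ≠ .one ∧ ∃ z ∈ gamma x, f z i = true) ∨
     (y i = .one ∧ x i = .up) ∨
     (y i = .down ∧ x i ≠ .zero ∧ ∃ z ∈ gamma x, f z i = false) ∨
     (y i = .zero ∧ x i = .down))

def mpReachP {n : ℕ} (f : BN n) : (Fin n → PState) → (Fin n → PState) → Prop :=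
  Relation.ReflTransGen (mpStep f)

def embed {n : ℕ} (x : Fin n → Bool) : Fin n → PState := fun i => PState.ofBool (x i)

def mpReach {n : ℕ} (f : BN n) (x : Fin n → Bool) : Set (Fin n → Bool) :=
  {y | mpReachP f (embed x) (embed y)}

def cubeSet {n : ℕ} (h : Fin n → Option Bool) : Set (Fin n → Bool) :=
  {z | ∀ i b, h i = some b → z i = b}

def smaller {n : ℕ} (h h' : Fin n → Option Bool) : Prop :=
  ∀ i b, h' i = some b → h i = some b

def kClosed {n : ℕ} (f : BN n) (K : Finset (Fin n)) (h : Fin n → Option Bool) : Prop :=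
  ∀ z ∈ cubeSet h, ∀ i ∈ K, h i = none ∨ h i = some (f z i)

def closedBy {n : ℕ} (f : BN n) (h : Fin n → Option Bool) : Prop :=
  ∀ z ∈ cubeSet h, f z ∈ cubeSet h

def smallestClosed {n : ℕ} (f : BN n) (x : Fin n → Bool) (h : Fin n → Option Bool) : Prop :=
  x ∈ cubeSet h ∧ closedBy f h ∧
    ∀ h', x ∈ cubeSet h' → closedBy f h' → smaller h h'

def minClosed {n : ℕ} (f : BN n) (h : Fin n → Option Bool) : Prop :=
  closedBy f h ∧ ∀ h', closedBy f h' → smaller h' h → h' = h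

def faStep {n : ℕ} (f : BN n) (x y : Fin n → Bool) : Prop :=
  ∃ i : Fin n, x i ≠ y i ∧ (∀ j, j ≠ i → x j = y j) ∧ y i = f x i

def aStep {n : ℕ} (f : BN n) (x y : Fin n → Bool) : Prop :=
  x ≠ y ∧ ∀ i, x i ≠ y i → y i = f x i

def mnStep {n m : ℕ} (F : (Fin n → Fin (m+1)) → Fin n → ℤ)
    (x y : Fin n → Fin (m+1)) : Prop :=
  x ≠ y ∧ ∀ i, x i ≠ y i → ((y i : ℤ) = (x i : ℤ) + F x i)

def beta {n m : ℕ} (x : Fin n → Fin (m+1)) : Set (Fin n → Bool) :=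
  {b | ∀ i, ((x i : ℕ) = 0 → b i = false) ∧ ((x i : ℕ) = m → b i = true)}

def refines {n m : ℕ} (F : (Fin n → Fin (m+1)) → Fin n → ℤ) (f : BN n) : Prop :=
  ∀ x i, (F x i > 0 → ∃ b ∈ beta x, f b i = true) ∧
         (F x i < 0 → ∃ b ∈ beta x, f b i = false)

def alpha {n m : ℕ} (x : Fin n → Fin (m+1)) : Set (Fin n → PState) :=
  {p | ∀ i, ((x i : ℕ) = 0 ↔ p i = .zero) ∧ ((x i : ℕ) = m ↔ p i = .one)}

def bdStep {n : ℕ} (f : BN n) (L : Finset (Fin n)) (a b : Fin n → PState) : Prop :=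
  mpStep f a b ∧ ∃ j, a j ≠ b j ∧ j ∉ L ∧ (a j).isBool ∧ ¬ (b j).isBool

def exhaustive {n : ℕ} (f : BN n) (x : Fin n → Bool) (L : Finset (Fin n))
    (zhat : Fin n → PState) : Prop :=
  Relation.ReflTransGen (bdStep f L) (embed x) zhat ∧ ∀ z', ¬ bdStep f L zhat z'

namespace Stmt14Aux

lemma ofBool_eq_iff (v w : Bool) : PState.ofBool v = PState.ofBool w ↔ v = w := by
  cases v <;> cases w <;> simp [PState.ofBool]

lemma ofBool_ne_up (v : Bool) : PState.ofBool v ≠ .up := by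
  cases v <;> simp [PState.ofBool]

lemma ofBool_ne_down (v : Bool) : PState.ofBool v ≠ .down := by
  cases v <;> simp [PState.ofBool]

def mix {n : ℕ} (z : Fin n → Bool) (S : Finset (Fin n)) : Fin n → Option Bool :=
  fun i => if i ∈ S then none else some (z i)

lemma gamma_eq {n : ℕ} (z : Fin n → Bool) (S : Finset (Fin n)) (p : Fin n → PState)
    (h1 : ∀ i ∉ S, p i = .ofBool (z i)) (h2 : ∀ i ∈ S, p i = .up ∨ p i = .down) :
    gamma p = cubeSet (mix z S) := by
  ext b
  constructor
  · intro hb i c hc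
    by_cases hi : i ∈ S
    · simp [mix, hi] at hc
    · simp [mix, hi] at hc
      subst hc
      exact hb i (z i) (h1 i hi)
  · intro hb i v hv
    by_cases hi : i ∈ S
    · rcases h2 i hi with hp | hp <;> rw [hp] at hv
      · exact absurd hv.symm (ofBool_ne_up v)
      · exact absurd hv.symm (ofBool_ne_down v)
    · rw [h1 i hi, ofBool_eq_iff] at hv
      rw [← hv]
      exact hb i (z i) (by simp [mix, hi])

lemma wit {n : ℕ} (f : BN n) (h : Fin n → Option Bool) (hmin : minClosed f h)
    (i : Fin n) (hi : h i = none) (v : Bool) : ∃ u ∈ cubeSet h, f u i = v := by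
  by_contra hc
  push_neg at hc
  have hall : ∀ u ∈ cubeSet h, f u i = !v := by
    intro u hu
    have := hc u hu
    cases hfv : f u i <;> cases v <;> simp_all
  set h' : Fin n → Option Bool := Function.update h i (some (!v)) with hh'
  have hsub : cubeSet h' ⊆ cubeSet h := by
    intro u hu j c hjc
    by_cases hj : j = i
    · subst hj; rw [hi] at hjc; exact absurd hjc (by simp)
    · exact hu j c (by rwa [hh', Function.update_of_ne hj])
  have hclosed : closedBy f h' := by
    intro u hu j c hjc
    by_cases hj : j = i
    · subst hj
      rw [hh', Function.update_self] at hjc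
      rw [hall u (hsub hu)]
      exact (Option.some_inj.mp hjc)
    · rw [hh', Function.update_of_ne hj] at hjc
      exact hmin.1 u (hsub hu) j c hjc
  have hsmall : smaller h' h := by
    intro j b hjb
    have hj : j ≠ i := by intro hji; rw [hji, hi] at hjb; exact absurd hjb (by simp)
    rwa [hh', Function.update_of_ne hj]
  have heq := hmin.2 h' hclosed hsmall
  have := congrFun heq i
  rw [hh', Function.update_self, hi] at this
  exact absurd this (by simp)

lemma sat {n : ℕ} (f : BN n) (h : Fin n → Option Bool) (hcl : closedBy f h)
    (z : Fin n → Bool) (hz : z ∈ cubeSet h) :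
    ∃ S : Finset (Fin n), ∃ p : Fin n → PState,
      mpReachP f (embed z) p ∧ (∀ i ∉ S, p i = .ofBool (z i)) ∧
      (∀ i ∈ S, p i = .up ∨ p i = .down) ∧ (∀ i ∈ S, h i = none) ∧
      (∀ w ∈ cubeSet (mix z S), ∀ i, i ∉ S → f w i = z i) := by
  suffices H : ∀ m (S : Finset (Fin n)) (p : Fin n → PState),
      Sᶜ.card ≤ m → mpReachP f (embed z) p → (∀ i ∉ S, p i = .ofBool (z i)) →
      (∀ i ∈ S, p i = .up ∨ p i = .down) → (∀ i ∈ S, h i = none) →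
      ∃ S' : Finset (Fin n), ∃ p' : Fin n → PState,
        mpReachP f (embed z) p' ∧ (∀ i ∉ S', p' i = .ofBool (z i)) ∧
        (∀ i ∈ S', p' i = .up ∨ p' i = .down) ∧ (∀ i ∈ S', h i = none) ∧
        (∀ w ∈ cubeSet (mix z S'), ∀ i, i ∉ S' → f w i = z i) by
    exact H (∅ : Finset (Fin n))ᶜ.card ∅ (embed z) le_rfl Relation.ReflTransGen.refl
      (fun i _ => rfl) (by simp) (by simp)
  intro m
  induction m with
  | zero =>
    intro S p hcard hreach h1 h2 h3
    refine ⟨S, p, hreach, h1, h2, h3, ?_⟩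
    intro w _ i hiS
    exfalso
    have : i ∈ Sᶜ := Finset.mem_compl.mpr hiS
    have := Finset.card_pos.mpr ⟨i, this⟩
    omega
  | succ m ih =>
    intro S p hcard hreach h1 h2 h3
    by_cases hfp : ∀ w ∈ cubeSet (mix z S), ∀ i, i ∉ S → f w i = z i
    · exact ⟨S, p, hreach, h1, h2, h3, hfp⟩
    · push_neg at hfp
      obtain ⟨w, hw, i, hiS, hfi⟩ := hfp
      have hγ : gamma p = cubeSet (mix z S) := gamma_eq z S p h1 h2
      have hpi : p i = .ofBool (z i) := h1 i hiS
      set q : PState := if f w i then .up else .down with hq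
      set p' : Fin n → PState := Function.update p i q with hp'
      have hstep : mpStep f p p' := by
        refine ⟨i, ?_, ?_, ?_⟩
        · rw [hp', Function.update_self, hpi, hq]
          cases hfwi : f w i
          · exact ofBool_ne_down (z i)
          · exact ofBool_ne_up (z i)
        · intro j hj; rw [hp', Function.update_of_ne hj]
        · rw [hp', Function.update_self, hq]
          cases hfwi : f w i
          · refine Or.inr (Or.inr (Or.inl ⟨rfl, ?_, w, by rw [hγ]; exact hw, hfwi⟩))
            rw [hpi]
            have : z i = true := by
              cases hzi : z i
              · rw [hzi] at hfi; rw [hfwi] at hfi; exact absurd rfl hfi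
              · rfl
            rw [this]; simp [PState.ofBool]
          · refine Or.inl ⟨rfl, ?_, w, by rw [hγ]; exact hw, hfwi⟩
            rw [hpi]
            have : z i = false := by
              cases hzi : z i
              · rfl
              · rw [hzi] at hfi; rw [hfwi] at hfi; exact absurd rfl hfi
            rw [this]; simp [PState.ofBool]
      have hwh : w ∈ cubeSet h := by
        intro j c hjc
        have hjS : j ∉ S := by
          intro hjmem; rw [h3 j hjmem] at hjc; exact absurd hjc (by simp)
        have : w j = z j := hw j (z j) (by simp [mix, hjS])
        rw [this]; exact hz j c hjc
      have hhi : h i = none := by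
        cases hhi : h i with
        | none => rfl
        | some b =>
          exfalso
          have hfwb : f w i = b := hcl w hwh i b hhi
          have hzb : z i = b := hz i b hhi
          rw [hfwb, ← hzb] at hfi; exact hfi rfl
      have hcard' : (insert i S)ᶜ.card ≤ m := by
        rw [Finset.compl_insert]
        have hmem : i ∈ Sᶜ := Finset.mem_compl.mpr hiS
        have := Finset.card_erase_of_mem hmem
        omega
      refine ih (insert i S) p' hcard' (hreach.tail hstep) ?_ ?_ ?_
      · intro j hj
        have hji : j ≠ i := by intro hji; exact hj (by rw [hji]; exact Finset.mem_insert_self i S)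
        rw [hp', Function.update_of_ne hji]
        exact h1 j (fun hjS => hj (Finset.mem_insert_of_mem hjS))
      · intro j hj
        rcases Finset.mem_insert.mp hj with hji | hjS
        · subst hji
          rw [hp', Function.update_self, hq]
          cases f w j
          · exact Or.inr rfl
          · exact Or.inl rfl
        · by_cases hji : j = i
          · subst hji
            rw [hp', Function.update_self, hq]
            cases f w j
            · exact Or.inr rfl
            · exact Or.inl rfl
          · rw [hp', Function.update_of_ne hji]; exact h2 j hjS
      · intro j hj
        rcases Finset.mem_insert.mp hj with hji | hjS
        · subst hji; exact hhi
        · exact h3 j hjS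

lemma phase2 {n : ℕ} (f : BN n) (h : Fin n → Option Bool) (hmin : minClosed f h)
    (z : Fin n → Bool) (S : Finset (Fin n)) (hS : ∀ i ∈ S, h i = none)
    (hmix : mix z S = h) (w : Fin n → Bool)
    (T : Finset (Fin n)) (hT : T ⊆ S) (p : Fin n → PState)
    (h1 : ∀ i ∉ S, p i = .ofBool (z i)) (h2 : ∀ i ∈ S, p i = .up ∨ p i = .down) :
    ∃ p' : Fin n → PState, mpReachP f p p' ∧
      (∀ i ∈ T, p' i = if w i then PState.up else PState.down) ∧
      (∀ i ∉ T, p' i = p i) := by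
  classical
  induction T using Finset.induction_on with
  | empty => exact ⟨p, Relation.ReflTransGen.refl, by simp, fun _ _ => rfl⟩
  | @insert a T haT ihT =>
    have haS : a ∈ S := hT (Finset.mem_insert_self a T)
    obtain ⟨p', hre, hin, hout⟩ := ihT (fun i hi => hT (Finset.mem_insert_of_mem hi))
    have h1' : ∀ i ∉ S, p' i = .ofBool (z i) := by
      intro i hi
      rw [hout i (fun hiT => hi (hT (Finset.mem_insert_of_mem hiT)))]
      exact h1 i hi
    have h2' : ∀ i ∈ S, p' i = .up ∨ p' i = .down := by
      intro i hi
      by_cases hiT : i ∈ T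
      · rw [hin i hiT]; cases w i
        · exact Or.inr (by simp)
        · exact Or.inl (by simp)
      · rw [hout i hiT]; exact h2 i hi
    have hγ : gamma p' = cubeSet h := by rw [gamma_eq z S p' h1' h2', hmix]
    have hpa : p' a = .up ∨ p' a = .down := h2' a haS
    set tgt : PState := if w a then .up else .down with htgt
    by_cases hdone : p' a = tgt
    · refine ⟨p', hre, ?_, ?_⟩
      · intro i hi
        rcases Finset.mem_insert.mp hi with hia | hiT
        · subst hia; exact hdone
        · exact hin i hiT
      · intro i hi
        exact hout i (fun hiT => hi (Finset.mem_insert_of_mem hiT))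
    · set p'' : Fin n → PState := Function.update p' a tgt with hp''
      have hstep : mpStep f p' p'' := by
        refine ⟨a, ?_, ?_, ?_⟩
        · rw [hp'', Function.update_self]; exact hdone
        · intro j hj; rw [hp'', Function.update_of_ne hj]
        · rw [hp'', Function.update_self, htgt]
          obtain ⟨u, hu, hfu⟩ := wit f h hmin a (hS a haS) (w a)
          cases hwa : w a
          · refine Or.inr (Or.inr (Or.inl ⟨rfl, ?_, u, by rw [hγ]; exact hu, by rwa [hwa] at hfu⟩))
            rcases hpa with hp | hp <;> rw [hp] <;> simp
          · refine Or.inl ⟨rfl, ?_, u, by rw [hγ]; exact hu, by rwa [hwa] at hfu⟩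
            rcases hpa with hp | hp <;> rw [hp] <;> simp
      refine ⟨p'', hre.tail hstep, ?_, ?_⟩
      · intro i hi
        rcases Finset.mem_insert.mp hi with hia | hiT
        · subst hia; rw [hp'', Function.update_self]
        · have hia : i ≠ a := fun hia => haT (hia ▸ hiT)
          rw [hp'', Function.update_of_ne hia]; exact hin i hiT
      · intro i hi
        have hia : i ≠ a := fun hia => hi (hia ▸ Finset.mem_insert_self a T)
        rw [hp'', Function.update_of_ne hia]
        exact hout i (fun hiT => hi (Finset.mem_insert_of_mem hiT))

lemma phase3 {n : ℕ} (f : BN n) (w : Fin n → Bool) (S : Finset (Fin n))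
    (T : Finset (Fin n)) (hT : T ⊆ S) (p : Fin n → PState)
    (h2 : ∀ i ∈ S, p i = if w i then PState.up else PState.down) :
    ∃ p' : Fin n → PState, mpReachP f p p' ∧
      (∀ i ∈ T, p' i = .ofBool (w i)) ∧ (∀ i ∉ T, p' i = p i) := by
  classical
  induction T using Finset.induction_on with
  | empty => exact ⟨p, Relation.ReflTransGen.refl, by simp, fun _ _ => rfl⟩
  | @insert a T haT ihT =>
    have haS : a ∈ S := hT (Finset.mem_insert_self a T)
    obtain ⟨p', hre, hin, hout⟩ := ihT (fun i hi => hT (Finset.mem_insert_of_mem hi))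
    have hpa : p' a = if w a then PState.up else PState.down := by
      rw [hout a haT]; exact h2 a haS
    set p'' : Fin n → PState := Function.update p' a (.ofBool (w a)) with hp''
    have hstep : mpStep f p' p'' := by
      refine ⟨a, ?_, ?_, ?_⟩
      · rw [hp'', Function.update_self, hpa]
        cases w a <;> simp [PState.ofBool]
      · intro j hj; rw [hp'', Function.update_of_ne hj]
      · rw [hp'', Function.update_self, hpa]
        cases w a
        · exact Or.inr (Or.inr (Or.inr ⟨rfl, rfl⟩))
        · exact Or.inr (Or.inl ⟨rfl, rfl⟩)
    refine ⟨p'', hre.tail hstep, ?_, ?_⟩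
    · intro i hi
      rcases Finset.mem_insert.mp hi with hia | hiT
      · subst hia; rw [hp'', Function.update_self]
      · have hia : i ≠ a := fun hia => haT (hia ▸ hiT)
        rw [hp'', Function.update_of_ne hia]; exact hin i hiT
    · intro i hi
      have hia : i ≠ a := fun hia => hi (hia ▸ Finset.mem_insert_self a T)
      rw [hp'', Function.update_of_ne hia]
      exact hout i (fun hiT => hi (Finset.mem_insert_of_mem hiT))

lemma main {n : ℕ} (f : BN n) (h : Fin n → Option Bool) (hmin : minClosed f h)
    (z : Fin n → Bool) (hz : z ∈ cubeSet h) (w : Fin n → Bool) (hw : w ∈ cubeSet h) :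
    mpReachP f (embed z) (embed w) := by
  obtain ⟨S, p, hreach, h1, h2, h3, hfp⟩ := sat f h hmin.1 z hz
  have hclosed' : closedBy f (mix z S) := by
    intro u hu j c hj
    by_cases hjS : j ∈ S
    · simp [mix, hjS] at hj
    · simp [mix, hjS] at hj
      rw [← hj]
      exact hfp u hu j hjS
  have hsmall : smaller (mix z S) h := by
    intro j b hjb
    have hjS : j ∉ S := by
      intro hjmem; rw [h3 j hjmem] at hjb; exact absurd hjb (by simp)
    have : z j = b := hz j b hjb
    simp [mix, hjS, this]
  have hmix : mix z S = h := hmin.2 (mix z S) hclosed' hsmall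
  obtain ⟨p2, hre2, hin2, hout2⟩ := phase2 f h hmin z S h3 hmix w S le_rfl p h1 h2
  have h2' : ∀ i ∈ S, p2 i = if w i then PState.up else PState.down := hin2
  obtain ⟨p3, hre3, hin3, hout3⟩ := phase3 f w S S le_rfl p2 h2'
  have hfinal : p3 = embed w := by
    funext i
    by_cases hiS : i ∈ S
    · rw [hin3 i hiS]; rfl
    · rw [hout3 i hiS, hout2 i hiS, h1 i hiS]
      have hhi : h i = some (z i) := by rw [← hmix]; simp [mix, hiS]
      have : w i = z i := hw i (z i) hhi
      simp [embed, this]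
  rw [← hfinal]
  exact (hreach.trans hre2).trans hre3

end Stmt14Aux

theorem stmt14 {n : ℕ} (f : BN n) (x : Fin n → Bool) (h : Fin n → Option Bool)
    (hsm : smallestClosed f x h) (hmin : minClosed f h) :
    (∀ z ∈ cubeSet h, z ∈ mpReach f x ∧ x ∈ mpReach f z) ∧
    x ∈ cubeSet h ∧ (cubeSet h).Nonempty ∧
    (∀ z ∈ cubeSet h, ∀ w ∈ cubeSet h, mpReach f z = mpReach f w) := by
  have hx := hsm.1
  refine ⟨?_, hx, ⟨x, hx⟩, ?_⟩
  · intro z hzc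
    exact ⟨Stmt14Aux.main f h hmin x hx z hzc, Stmt14Aux.main f h hmin z hzc x hx⟩
  · intro z hz w hw
    ext y
    simp only [mpReach, Set.mem_setOf_eq]
    constructor
    · intro hy
      exact (Stmt14Aux.main f h hmin w hw z hz).trans hy
    · intro hy
      exact (Stmt14Aux.main f h hmin z hz w hw).trans hy
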